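/- In A₀, for every s ≥ 1 one has R(s+1) = δ_(s+1) − δ_s·δ_1 − Σ_{r=0}^{s−2} δ_(r+1)·R(s−r), where δ_k = i^k j^k (the sum being empty for s = 1, so that R(2) = i²j² − (ij)²). -/
import Mathlib


open FreeAlgebra

noncomputable section

/-- Defining relations for the specialisation at `q = 0` of the generic composition
algebra of the Kronecker quiver, on generators `i = ι ℚ 0` and `j = ι ℚ 1`:
(1) `i^m j^(m+1) i^(m+1) j^(m+2) = i^(2m+1) j^(2m+3)` for all `m ≥ 0`;
(2) `i^(n+2) j^(n+1) i^(n+1) j^n = i^(2n+3) j^(2n+1)` for all `n ≥ 0`;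
(3) `(i^m j^m)(i^n j^n) = (i^n j^n)(i^m j^m)` for all `m, n ≥ 1`. -/
inductive KroneckerRel0 : FreeAlgebra ℚ (Fin 2) → FreeAlgebra ℚ (Fin 2) → Prop
  | preproj (m : ℕ) :
      KroneckerRel0
        (ι ℚ 0 ^ m * ι ℚ 1 ^ (m + 1) * (ι ℚ 0 ^ (m + 1) * ι ℚ 1 ^ (m + 2)))
        (ι ℚ 0 ^ (2 * m + 1) * ι ℚ 1 ^ (2 * m + 3))
  | preinj (n : ℕ) :
      KroneckerRel0
        (ι ℚ 0 ^ (n + 2) * ι ℚ 1 ^ (n + 1) * (ι ℚ 0 ^ (n + 1) * ι ℚ 1 ^ n))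
        (ι ℚ 0 ^ (2 * n + 3) * ι ℚ 1 ^ (2 * n + 1))
  | deltaComm (m n : ℕ) (hm : 1 ≤ m) (hn : 1 ≤ n) :
      KroneckerRel0
        (ι ℚ 0 ^ m * ι ℚ 1 ^ m * (ι ℚ 0 ^ n * ι ℚ 1 ^ n))
        (ι ℚ 0 ^ n * ι ℚ 1 ^ n * (ι ℚ 0 ^ m * ι ℚ 1 ^ m))

/-- `A₀`, the composition algebra of the Kronecker quiver specialised at `q = 0`,
presented by generators `i, j` and the relations above. -/
abbrev A0 : Type := RingQuot KroneckerRel0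

/-- The generator `i` of `A₀`. -/
def iA : A0 := RingQuot.mkAlgHom ℚ KroneckerRel0 (ι ℚ 0)

/-- The generator `j` of `A₀`. -/
def jA : A0 := RingQuot.mkAlgHom ℚ KroneckerRel0 (ι ℚ 1)

/-- The commutator `ij - ji` in `A₀`. -/
def cA : A0 := iA * jA - jA * iA

/-- `P(m) = (ij - ji)^m j` in `A₀`. -/
def PA (m : ℕ) : A0 := cA ^ m * jA

/-- `I(n) = i (ij - ji)^n` in `A₀`. -/
def IA (n : ℕ) : A0 := iA * cA ^ n

/-- `R(1) = ij - ji` and `R(s+1) = i (ij - ji)^s j` for `s ≥ 1` in `A₀`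
(the value at `0` is junk). -/
def RA : ℕ → A0
  | 0 => 0
  | 1 => cA
  | (s + 2) => iA * cA ^ (s + 1) * jA

/-- `δ_m = i^m j^m` in `A₀`. -/
def deltaA (m : ℕ) : A0 := iA ^ m * jA ^ m


private lemma powsplit (x : A0) (a b c : ℕ) (h : c = a + b) : x ^ c = x ^ a * x ^ b := by
  rw [h, pow_add]

private lemma key0 : iA ^ 2 * jA * iA = iA ^ 3 * jA := by
  have h := RingQuot.mkAlgHom_rel ℚ (KroneckerRel0.preinj 0)
  simp only [map_mul, map_pow] at h
  norm_num at h
  simpa [iA, jA, mul_assoc] using h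

private lemma key1 : jA * iA * jA ^ 2 = iA * jA ^ 3 := by
  have h := RingQuot.mkAlgHom_rel ℚ (KroneckerRel0.preproj 0)
  simp only [map_mul, map_pow] at h
  norm_num at h
  simpa [iA, jA, mul_assoc] using h

private lemma dcomm (m n : ℕ) (hm : 1 ≤ m) (hn : 1 ≤ n) :
    deltaA m * deltaA n = deltaA n * deltaA m := by
  have h := RingQuot.mkAlgHom_rel ℚ (KroneckerRel0.deltaComm m n hm hn)
  simp only [map_mul, map_pow] at h
  simpa [deltaA, iA, jA, mul_assoc] using h

private lemma jpush : ∀ k : ℕ, jA ^ k * iA * jA ^ 2 = iA * jA ^ (k + 2) := by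
  intro k
  induction k with
  | zero => simp
  | succ k ih =>
    calc jA ^ (k + 1) * iA * jA ^ 2 = jA ^ k * (jA * iA * jA ^ 2) := by
          rw [pow_succ]; noncomm_ring
      _ = jA ^ k * (iA * jA ^ 3) := by rw [key1]
      _ = jA ^ k * iA * jA ^ 2 * jA := by noncomm_ring
      _ = iA * jA ^ (k + 2) * jA := by rw [ih]
      _ = iA * jA ^ (k + 1 + 2) := by rw [mul_assoc, ← pow_succ]

private lemma lemL4 : ∀ b : ℕ, iA * (deltaA b * deltaA 1) = iA * deltaA (b + 1)
  | 0 => by simp [deltaA]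
  | 1 => by
      calc iA * (deltaA 1 * deltaA 1) = iA ^ 2 * jA * iA * jA := by
            simp only [deltaA, pow_one]; noncomm_ring
        _ = iA ^ 3 * jA * jA := by rw [key0]
        _ = iA * deltaA 2 := by simp only [deltaA]; noncomm_ring
  | (m + 2) => by
      calc iA * (deltaA (m + 2) * deltaA 1)
          = iA * (deltaA 1 * deltaA (m + 2)) := by
            rw [dcomm (m + 2) 1 (by omega) (by omega)]
        _ = iA ^ 2 * jA * iA * (iA ^ (m + 1) * jA ^ (m + 2)) := by
            simp only [deltaA, pow_one]
            rw [powsplit iA 1 (m + 1) (m + 2) (by omega)]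
            noncomm_ring
        _ = iA ^ 3 * jA * (iA ^ (m + 1) * jA ^ (m + 2)) := by rw [key0]
        _ = iA ^ 2 * (deltaA 1 * deltaA (m + 1)) * jA := by
            simp only [deltaA, pow_one]
            rw [powsplit jA (m + 1) 1 (m + 2) (by omega),
              powsplit iA 2 1 3 (by omega)]
            noncomm_ring
        _ = iA ^ 2 * (deltaA (m + 1) * deltaA 1) * jA := by
            rw [dcomm 1 (m + 1) (by omega) (by omega)]
        _ = iA ^ (m + 3) * (jA ^ (m + 1) * iA * jA ^ 2) := by
            simp only [deltaA, pow_one]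
            rw [powsplit iA 2 (m + 1) (m + 3) (by omega)]
            noncomm_ring
        _ = iA ^ (m + 3) * (iA * jA ^ (m + 1 + 2)) := by rw [jpush (m + 1)]
        _ = iA * deltaA (m + 2 + 1) := by
            have h1 : iA ^ (m + 3) * iA = iA * iA ^ (m + 3) :=
              (pow_succ iA (m + 3)).symm.trans (pow_succ' iA (m + 3))
            have h2 : (m + 1 + 2) = (m + 3) := by omega
            have h3 : (m + 2 + 1) = (m + 3) := by omega
            rw [h2, h3, deltaA, ← mul_assoc, h1, mul_assoc]

private lemma Ifree (t : ℕ) :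
    IA t * deltaA 1 = IA (t + 1) + iA * cA ^ t * jA * iA := by
  simp only [IA, deltaA, pow_one]
  rw [pow_succ, ← mul_assoc iA (cA ^ t) cA, mul_assoc (iA * cA ^ t) jA iA,
    show cA = iA * jA - jA * iA from rfl, mul_sub]
  abel

private lemma lemB (k : ℕ)
    (hA : iA * deltaA k = ∑ t ∈ Finset.range (k + 1), deltaA (k - t) * IA t) :
    deltaA (k + 1) =
      deltaA k * deltaA 1 + ∑ t ∈ Finset.range k, deltaA (k - 1 - t) * RA (t + 2) := by
  have h1 : deltaA (k + 1) = iA * deltaA k * jA := by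
    simp only [deltaA]
    rw [pow_succ jA k, pow_succ' iA k]
    noncomm_ring
  calc deltaA (k + 1) = iA * deltaA k * jA := h1
    _ = (∑ t ∈ Finset.range (k + 1), deltaA (k - t) * IA t) * jA := by rw [hA]
    _ = ∑ t ∈ Finset.range (k + 1), deltaA (k - t) * IA t * jA := Finset.sum_mul _ _ _
    _ = (∑ t ∈ Finset.range k, deltaA (k - (t + 1)) * IA (t + 1) * jA)
          + deltaA (k - 0) * IA 0 * jA := Finset.sum_range_succ' _ k
    _ = deltaA k * deltaA 1
          + ∑ t ∈ Finset.range k, deltaA (k - 1 - t) * RA (t + 2) := by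
        rw [add_comm]
        congr 1
        · simp [IA, deltaA, mul_assoc]
        · refine Finset.sum_congr rfl fun t ht => ?_
          have h2 : k - (t + 1) = k - 1 - t := by omega
          rw [h2, mul_assoc]
          congr 1

private lemma lemA (k : ℕ) :
    iA * deltaA k = ∑ t ∈ Finset.range (k + 1), deltaA (k - t) * IA t := by
  induction k with
  | zero => simp [deltaA, IA]
  | succ k ih =>
    have hB := lemB k ih
    have e2 : ∀ t : ℕ, deltaA (k - t) * IA t * deltaA 1
        = deltaA (k - t) * IA (t + 1) + deltaA (k - t) * (iA * cA ^ t * jA * iA) := by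
      intro t
      rw [mul_assoc, Ifree t, mul_add]
    have e4 : ∑ t ∈ Finset.range (k + 1), deltaA (k - t) * (iA * cA ^ t * jA)
        = deltaA (k + 1) := by
      rw [Finset.sum_range_succ']
      rw [hB, add_comm (deltaA k * deltaA 1)]
      congr 1
      · refine Finset.sum_congr rfl fun t ht => ?_
        have h2 : k - (t + 1) = k - 1 - t := by omega
        rw [h2]
        rfl
      · simp [deltaA]
    have e3 : ∑ t ∈ Finset.range (k + 1), deltaA (k - t) * (iA * cA ^ t * jA * iA)
        = deltaA (k + 1) * IA 0 := by
      have e5 : ∀ t : ℕ, deltaA (k - t) * (iA * cA ^ t * jA * iA)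
          = deltaA (k - t) * (iA * cA ^ t * jA) * iA := fun t => (mul_assoc _ _ _).symm
      rw [Finset.sum_congr rfl fun t _ => e5 t, ← Finset.sum_mul, e4]
      simp [IA]
    calc iA * deltaA (k + 1) = iA * (deltaA k * deltaA 1) := (lemL4 k).symm
      _ = iA * deltaA k * deltaA 1 := by rw [mul_assoc]
      _ = (∑ t ∈ Finset.range (k + 1), deltaA (k - t) * IA t) * deltaA 1 := by rw [ih]
      _ = ∑ t ∈ Finset.range (k + 1), deltaA (k - t) * IA t * deltaA 1 :=
          Finset.sum_mul _ _ _
      _ = ∑ t ∈ Finset.range (k + 1),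
            (deltaA (k - t) * IA (t + 1) + deltaA (k - t) * (iA * cA ^ t * jA * iA)) :=
          Finset.sum_congr rfl fun t _ => e2 t
      _ = (∑ t ∈ Finset.range (k + 1), deltaA (k - t) * IA (t + 1))
            + ∑ t ∈ Finset.range (k + 1), deltaA (k - t) * (iA * cA ^ t * jA * iA) :=
          Finset.sum_add_distrib
      _ = (∑ t ∈ Finset.range (k + 1), deltaA (k - t) * IA (t + 1))
            + deltaA (k + 1) * IA 0 := by rw [e3]
      _ = ∑ t ∈ Finset.range (k + 1 + 1), deltaA (k + 1 - t) * IA t := by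
          rw [Finset.sum_range_succ' (fun t => deltaA (k + 1 - t) * IA t) (k + 1)]
          congr 1
          · refine Finset.sum_congr rfl fun t ht => ?_
            have h2 : k + 1 - (t + 1) = k - t := by omega
            rw [h2]

/-- In `A₀`, for every `s ≥ 1`,
`R(s+1) = δ_(s+1) - δ_s δ_1 - ∑_{r=0}^{s-2} δ_(r+1) R(s-r)`
(the sum being empty for `s = 1`). -/
theorem regular_in_terms_of_deltas (s : ℕ) (hs : 1 ≤ s) :
    RA (s + 1) =
      deltaA (s + 1) - deltaA s * deltaA 1
        - ∑ r ∈ Finset.range (s - 1), deltaA (r + 1) * RA (s - r) := by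
  obtain ⟨m, rfl⟩ : ∃ m, s = m + 1 := ⟨s - 1, by omega⟩
  have hB : deltaA (m + 2) =
      deltaA (m + 1) * deltaA 1 + ∑ t ∈ Finset.range (m + 1), deltaA (m - t) * RA (t + 2) :=
    lemB (m + 1) (lemA (m + 1))
  rw [Finset.sum_range_succ] at hB
  simp only [Nat.sub_self] at hB
  have d0 : deltaA 0 = 1 := by simp [deltaA]
  rw [d0, one_mul] at hB
  have hre : ∑ r ∈ Finset.range m, deltaA (r + 1) * RA (m + 1 - r)
      = ∑ t ∈ Finset.range m, deltaA (m - t) * RA (t + 2) := by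
    rw [← Finset.sum_range_reflect (fun t => deltaA (m - t) * RA (t + 2)) m]
    refine Finset.sum_congr rfl fun r hr => ?_
    rw [Finset.mem_range] at hr
    have h1 : r + 1 = m - (m - 1 - r) := by omega
    have h2 : m + 1 - r = m - 1 - r + 2 := by omega
    rw [h1, h2]
  show RA (m + 2) = deltaA (m + 2) - deltaA (m + 1) * deltaA 1
    - ∑ r ∈ Finset.range m, deltaA (r + 1) * RA (m + 1 - r)
  rw [hre, hB]
  abel
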